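/- arXiv:math/0206160 — 3 statements merged into one kernel-verified Lean document; each statement's English description precedes it below -/
import Mathlib

section
/- Assume the environment has finite range M and Kalikow's condition with constant ε > 0 holds in direction ℓ. Let U ⊂ Z^d be an M-connected set containing 0 with E_0(T_U) < ∞, where T_U is the exit time of U. Then E_0(X_{T_U}·ℓ) ≥ ε E_0(T_U). -/
open MeasureTheory Filter Set
open scoped ENNReal

noncomputable section

abbrev Zd (d : ℕ) := Fin d → ℤ
abbrev Env (d : ℕ) := Zd d → Zd d → ℝ
abbrev Traj (d : ℕ) := ℕ → Zd d

/-- shift of the environment by `k`: `(T^k ω) x e = ω (k+x) e`. -/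
def shiftE {d : ℕ} (k : Zd d) (ω : Env d) : Env d := fun x e => ω (k + x) e

/-- the sup-norm ball of radius `M` in `ℤ^d`, the set of admissible jumps. -/
def box (d M : ℕ) : Finset (Zd d) := Finset.Icc (fun _ => -(M : ℤ)) (fun _ => (M : ℤ))

/-- scalar product `x · ℓ`. -/
def dotl {d : ℕ} (x : Zd d) (ℓ : Fin d → ℝ) : ℝ := ∑ i, (x i : ℝ) * ℓ i

/-- the local drift in direction `ℓ`: `D(ω)·ℓ`. -/
def driftl {d : ℕ} (M : ℕ) (ℓ : Fin d → ℝ) (ω : Env d) : ℝ :=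
  ∑ e ∈ box d M, dotl e ℓ * ω 0 e

/-- `μ` is the law of the quenched walk in environment `ω` started at `x0`:
a probability measure with `X_0 = x0` a.s., and the Markov property with
transition probabilities `ω i (j - i)` from `i` to `j`. -/
def IsWalk {d : ℕ} (μ : Measure (Traj d)) (ω : Env d) (x0 : Zd d) : Prop :=
  IsProbabilityMeasure μ ∧ μ {w | w 0 = x0} = 1 ∧
  ∀ (n : ℕ) (A : Set (Traj d)), MeasurableSet A →
    (∀ w w' : Traj d, (∀ m ≤ n, w m = w' m) → (w ∈ A ↔ w' ∈ A)) →
    ∀ i j : Zd d,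
      μ (A ∩ {w | w n = i ∧ w (n + 1) = j}) =
        ENNReal.ofReal (ω i (j - i)) * μ (A ∩ {w | w n = i})

/-- a nice environment of range `M`: nonnegative transition probabilities of
total mass one, supported on jumps of sup-norm at most `M`. -/
def GoodEnv {d : ℕ} (M : ℕ) (ω : Env d) : Prop :=
  (∀ x e, 0 ≤ ω x e) ∧ (∀ x, ∑ e ∈ box d M, ω x e = 1) ∧
  (∀ x e, e ∉ box d M → ω x e = 0)

/-- `U` is `M`-connected: there is a path of range `M` through all its points. -/
def MConn {d : ℕ} (M : ℕ) (U : Finset (Zd d)) : Prop :=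
  ∃ (n : ℕ) (p : ℕ → Zd d), (∀ i ≤ n, p i ∈ U) ∧
    (∀ i < n, p (i + 1) - p i ∈ box d M) ∧ (∀ x ∈ U, ∃ i ≤ n, p i = x)

/-- `E^ω_{x0}[Σ_{j=0}^{T_U} 1(X_j = x)]`, the expected number of visits to `x`
before exiting `U`. -/
def exitGreen {d : ℕ} (μ : Measure (Traj d)) (U : Set (Zd d)) (x : Zd d) : ℝ≥0∞ :=
  ∑' j : ℕ, μ {w | w j = x ∧ ∀ m < j, w m ∈ U}

/-- Kalikow's condition in direction `ℓ` with constant `ε`, for the annealed walk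
with environment distribution `IP` and quenched laws `P ω` (started at `0`). -/
def KalikowCond {d : ℕ} (IP : Measure (Env d)) (P : Env d → Measure (Traj d))
    (M : ℕ) (ℓ : Fin d → ℝ) (ε : ℝ) : Prop :=
  0 < ε ∧ ∀ U : Finset (Zd d), (0 : Zd d) ∈ U → MConn M U → ∀ x ∈ U,
    ε * ∫ ω, (exitGreen (P ω) (↑U) x).toReal ∂IP ≤
      ∫ ω, driftl M ℓ (shiftE x ω) * (exitGreen (P ω) (↑U) x).toReal ∂IP

/-- shift invariance of the environment measure. -/
def ShiftInv {d : ℕ} (IP : Measure (Env d)) : Prop :=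
  ∀ k : Zd d, Measure.map (shiftE k) IP = IP

/-- ergodicity of the environment measure under the shifts. -/
def ErgEnv {d : ℕ} (IP : Measure (Env d)) : Prop :=
  ShiftInv IP ∧ ∀ S : Set (Env d), MeasurableSet S →
    (∀ k : Zd d, shiftE k ⁻¹' S = S) → IP S = 0 ∨ IP S = 1

/-- invariance of a measure for the environment process viewed from the particle,
whose kernel is `π(ω, A) = Σ_{|e| ≤ M} π_{0e}(ω) 1_A(T^e ω)`. -/
def EnvInvariant {d : ℕ} (M : ℕ) (IPinf : Measure (Env d)) : Prop :=
  ∀ A : Set (Env d), MeasurableSet A →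
    ∫⁻ ω, ∑ e ∈ box d M, ENNReal.ofReal (ω 0 e) * A.indicator 1 (shiftE e ω) ∂IPinf
      = IPinf A

/-- weak ellipticity in direction `ℓ`: a.s. `π_{0j} > 0` for all unit vectors `j`
with `j·ℓ ≥ 0`. -/
def WeakElliptic {d : ℕ} (IP : Measure (Env d)) (ℓ : Fin d → ℝ) : Prop :=
  ∀ᵐ ω ∂IP, ∀ e : Zd d, (∑ i, (e i) * (e i)) = 1 → 0 ≤ dotl e ℓ → 0 < ω 0 e

/-- the half-space σ-field `S_k = σ(ω_x : x·ℓ ≥ k)`. -/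
def Sfield {d : ℕ} (ℓ : Fin d → ℝ) (k : ℝ) : MeasurableSpace (Env d) :=
  ⨆ x ∈ {x : Zd d | k ≤ dotl x ℓ}, MeasurableSpace.comap (fun ω : Env d => ω x) inferInstance

/-- the exit time `T_U = inf {j : X_j ∉ U}` of a trajectory from `U`. -/
def exitTime {d : ℕ} (U : Set (Zd d)) (w : Traj d) : ℕ := sInf {j | w j ∉ U}

/-- a (possibly infinite) set is `M`-connected if every point is joined to `0`
by a path of range `M` inside the set. -/
def MConnSet {d : ℕ} (M : ℕ) (U : Set (Zd d)) : Prop :=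
  ∀ x ∈ U, ∃ (n : ℕ) (p : ℕ → Zd d), p 0 = 0 ∧ p n = x ∧
    (∀ i ≤ n, p i ∈ U) ∧ ∀ i < n, p (i + 1) - p i ∈ box d M

/-!
Write `X_T · ℓ` as the telescoping sum of the increments `(X_{n+1} - X_n) · ℓ` over `n < T`.
Conditioning each increment on `X_n = z` turns its annealed expectation into the local drift at
`z`, so `E_0(X_T · ℓ) = Σ_z E[D(T^z ω) · ℓ g_U(z, ω)]` with `g_U(z, ω)` the quenched expected number
of visits to `z` before `T_U`, while `E_0(T_U) = Σ_z E[g_U(z, ω)]`. Kalikow's condition compares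
the summands site by site. It is only assumed for finite sets, so for infinite `U` it is applied to
the finite `M`-connected sets of points reachable from `0` in `k` jumps inside `U`, whose Green
functions increase to `g_U`; since the drift is bounded by `M Σ |ℓ_i|`, dominated convergence
passes to the limit. `E_0(T_U) < ∞` justifies every exchange of sums and integrals.
-/

open Topology

section

variable {d M : ℕ}

lemma measurableSet_coord_mem (j : ℕ) (S : Set (Zd d)) :
    MeasurableSet {w : Traj d | w j ∈ S} :=
  measurable_pi_apply j S.to_countable.measurableSet

lemma measurableSet_coord_eq (j : ℕ) (z : Zd d) : MeasurableSet {w : Traj d | w j = z} := by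
  simpa using measurableSet_coord_mem j {z}

lemma neg_mem_box {e : Zd d} (he : e ∈ box d M) : -e ∈ box d M := by
  simp only [box, Finset.mem_Icc, Pi.le_def, Pi.neg_apply] at he ⊢
  exact ⟨fun i => neg_le_neg (he.2 i), fun i => by simpa using neg_le_neg (he.1 i)⟩

lemma dotl_sub (a b : Zd d) (ℓ : Fin d → ℝ) : dotl (a - b) ℓ = dotl a ℓ - dotl b ℓ := by
  simp [dotl, sub_mul, Finset.sum_sub_distrib]

lemma abs_dotl_le {e : Zd d} (he : e ∈ box d M) (ℓ : Fin d → ℝ) :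
    |dotl e ℓ| ≤ M * ∑ i, |ℓ i| := by
  simp only [box, Finset.mem_Icc, Pi.le_def] at he
  rw [Finset.mul_sum]
  refine (Finset.abs_sum_le_sum_abs _ _).trans (Finset.sum_le_sum fun i _ => ?_)
  rw [abs_mul]
  gcongr
  exact abs_le.mpr ⟨by exact_mod_cast he.1 i, by exact_mod_cast he.2 i⟩

lemma driftl_shiftE (ℓ : Fin d → ℝ) (z : Zd d) (ω : Env d) :
    driftl M ℓ (shiftE z ω) = ∑ e ∈ box d M, dotl e ℓ * ω z e := by
  simp [driftl, shiftE]

lemma measurable_driftl_shiftE (ℓ : Fin d → ℝ) (z : Zd d) :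
    Measurable fun ω : Env d => driftl M ℓ (shiftE z ω) := by
  simp only [driftl_shiftE]
  fun_prop

lemma GoodEnv.le_one {ω : Env d} (hg : GoodEnv M ω) (z e : Zd d) : ω z e ≤ 1 := by
  by_cases he : e ∈ box d M
  · rw [← hg.2.1 z]
    exact Finset.single_le_sum (fun e _ => hg.1 z e) he
  · rw [hg.2.2 z e he]
    exact zero_le_one

lemma GoodEnv.abs_driftl_shiftE_le {ω : Env d} (hg : GoodEnv M ω) (ℓ : Fin d → ℝ) (z : Zd d) :
    |driftl M ℓ (shiftE z ω)| ≤ M * ∑ i, |ℓ i| := by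
  rw [driftl_shiftE]
  calc |∑ e ∈ box d M, dotl e ℓ * ω z e|
      ≤ ∑ e ∈ box d M, (M * ∑ i, |ℓ i|) * ω z e := by
        refine (Finset.abs_sum_le_sum_abs _ _).trans (Finset.sum_le_sum fun e he => ?_)
        rw [abs_mul, abs_of_nonneg (hg.1 z e)]
        exact mul_le_mul_of_nonneg_right (abs_dotl_le he ℓ) (hg.1 z e)
    _ = M * ∑ i, |ℓ i| := by rw [← Finset.mul_sum, hg.2.1 z, mul_one]

def staysIn (U : Set (Zd d)) (n : ℕ) : Set (Traj d) := {w | ∀ m ≤ n, w m ∈ U}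

def stepEvent (U : Set (Zd d)) (n : ℕ) (z e : Zd d) : Set (Traj d) :=
  staysIn U n ∩ {w | w n = z ∧ w (n + 1) = z + e}

lemma measurableSet_staysIn (U : Set (Zd d)) (n : ℕ) : MeasurableSet (staysIn U n) := by
  have : staysIn U n = ⋂ m ∈ Finset.range (n + 1), {w : Traj d | w m ∈ U} := by
    ext w; simp [staysIn]
  rw [this]
  exact .biInter (Set.to_countable _) fun m _ => measurableSet_coord_mem m U

lemma measurableSet_stepEvent (U : Set (Zd d)) (n : ℕ) (z e : Zd d) :
    MeasurableSet (stepEvent U n z e) :=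
  (measurableSet_staysIn U n).inter
    ((measurableSet_coord_eq n z).inter (measurableSet_coord_eq (n + 1) (z + e)))

open Classical in
/-- `P^ω(X_m ∈ U for m ≤ n, X_n = z)`, computed from the transition probabilities so that it is
measurable in `ω`; `ω ↦ P ω S` itself is not assumed measurable. -/
def stayProb (U : Set (Zd d)) : ℕ → Zd d → Env d → ℝ≥0∞
  | 0, z, _ => if z = 0 then 1 else 0
  | n + 1, z, ω => if z ∈ U then ∑' y, ENNReal.ofReal (ω y (z - y)) * stayProb U n y ω else 0

def greenFun (U : Set (Zd d)) (z : Zd d) (ω : Env d) : ℝ≥0∞ := ∑' n, stayProb U n z ω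

lemma measurable_stayProb (U : Set (Zd d)) (n : ℕ) (z : Zd d) :
    Measurable (stayProb U n z) := by
  induction n generalizing z with
  | zero => exact measurable_const
  | succ n ih =>
    simp only [stayProb]
    split
    · exact .tsum fun y => (by fun_prop : Measurable fun ω : Env d => ω y (z - y))
        |>.ennreal_ofReal.mul (ih y)
    · exact measurable_const

lemma measurable_greenFun (U : Set (Zd d)) (z : Zd d) : Measurable (greenFun U z) :=
  .tsum fun n => measurable_stayProb U n z

lemma stayProb_eq_zero_of_notMem {U : Set (Zd d)} (h0 : (0 : Zd d) ∈ U) {z : Zd d}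
    (hz : z ∉ U) (n : ℕ) (ω : Env d) : stayProb U n z ω = 0 := by
  cases n with
  | zero => simp only [stayProb]; rw [if_neg (by rintro rfl; exact hz h0)]
  | succ n => simp only [stayProb]; rw [if_neg hz]

lemma stayProb_mono {U V : Set (Zd d)} (h : U ⊆ V) (n : ℕ) (z : Zd d) (ω : Env d) :
    stayProb U n z ω ≤ stayProb V n z ω := by
  induction n generalizing z with
  | zero => rfl
  | succ n ih =>
    simp only [stayProb]
    split_ifs with hU hV
    · exact ENNReal.tsum_le_tsum fun y => by gcongr; exact ih y
    · exact absurd (h hU) hV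
    · exact zero_le
    · rfl

lemma staysIn_succ_inter_eq_iUnion {U : Set (Zd d)} {z : Zd d} (hz : z ∈ U) (n : ℕ) :
    staysIn U (n + 1) ∩ {w : Traj d | w (n + 1) = z} =
      ⋃ y, staysIn U n ∩ {w | w n = y ∧ w (n + 1) = z} := by
  ext w
  simp only [staysIn, Set.mem_iUnion, Set.mem_inter_iff, Set.mem_ofPred_eq]
  constructor
  · rintro ⟨h, hn⟩
    exact ⟨w n, fun m hm => h m (by omega), rfl, hn⟩
  rintro ⟨y, h, -, hn⟩
  refine ⟨fun m hm => ?_, hn⟩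
  rcases Nat.lt_or_eq_of_le hm with hm | rfl
  exacts [h m (by omega), hn ▸ hz]

section Walk

variable {U : Set (Zd d)} {μ : Measure (Traj d)} {ω : Env d}

lemma IsWalk.ae_start {x0 : Zd d} (hw : IsWalk μ ω x0) : ∀ᵐ w ∂μ, w 0 = x0 := by
  have := hw.1
  exact (prob_compl_eq_zero_iff (measurableSet_coord_eq 0 x0)).mpr hw.2.1

lemma IsWalk.measure_staysIn_step {x0 : Zd d} (hw : IsWalk μ ω x0) (n : ℕ) (y x : Zd d) :
    μ (staysIn U n ∩ {w | w n = y ∧ w (n + 1) = x}) =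
      ENNReal.ofReal (ω y (x - y)) * μ (staysIn U n ∩ {w | w n = y}) :=
  hw.2.2 n _ (measurableSet_staysIn U n)
    (fun w w' h => forall₂_congr fun m hm => by rw [h m hm]) y x

lemma IsWalk.measure_staysIn_inter (h0 : (0 : Zd d) ∈ U) (hw : IsWalk μ ω 0) (n : ℕ)
    (z : Zd d) : μ (staysIn U n ∩ {w | w n = z}) = stayProb U n z ω := by
  induction n generalizing z with
  | zero =>
    by_cases hz : z = 0
    · subst hz
      have : staysIn U 0 ∩ {w : Traj d | w 0 = 0} = {w | w 0 = 0} := by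
        ext w
        simp +contextual [staysIn, h0]
      rw [this, hw.2.1, stayProb, if_pos rfl]
    · rw [stayProb, if_neg hz]
      have hnull : μ {w | ¬ w 0 = 0} = 0 := ae_iff.mp hw.ae_start
      exact measure_mono_null (fun w hw' h => hz (hw'.2 ▸ h)) hnull
  | succ n ih =>
    simp only [stayProb]
    split_ifs with hz
    · rw [staysIn_succ_inter_eq_iUnion hz, measure_iUnion]
      · simp only [hw.measure_staysIn_step, ih]
      · intro a b hab
        exact Set.disjoint_left.mpr fun w ha hb => hab (ha.2.1.symm.trans hb.2.1)
      · exact fun y => (measurableSet_staysIn U n).inter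
          ((measurableSet_coord_eq n y).inter (measurableSet_coord_eq (n + 1) z))
    · have : staysIn U (n + 1) ∩ {w : Traj d | w (n + 1) = z} = ∅ :=
        Set.eq_empty_iff_forall_notMem.mpr fun w hw' => hz (hw'.2 ▸ hw'.1 (n + 1) le_rfl)
      rw [this, measure_empty]

lemma IsWalk.measure_stepEvent (h0 : (0 : Zd d) ∈ U) (hw : IsWalk μ ω 0) (n : ℕ) (z e : Zd d) :
    μ (stepEvent U n z e) = ENNReal.ofReal (ω z e) * stayProb U n z ω := by
  rw [stepEvent, hw.measure_staysIn_step, add_sub_cancel_left, hw.measure_staysIn_inter h0]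

lemma IsWalk.stayProb_le_one (h0 : (0 : Zd d) ∈ U) (hw : IsWalk μ ω 0) (n : ℕ) (z : Zd d) :
    stayProb U n z ω ≤ 1 := by
  have := hw.1
  exact hw.measure_staysIn_inter h0 n z ▸ prob_le_one

lemma IsWalk.exitGreen_eq (h0 : (0 : Zd d) ∈ U) (hw : IsWalk μ ω 0) {z : Zd d} (hz : z ∈ U) :
    exitGreen μ U z = greenFun U z ω := by
  refine tsum_congr fun n => ?_
  rw [← hw.measure_staysIn_inter h0]
  congr 1
  ext w
  simp only [staysIn, Set.mem_ofPred_eq, Set.mem_inter_iff]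
  refine ⟨fun ⟨hn, h⟩ => ⟨fun m hm => ?_, hn⟩, fun ⟨h, hn⟩ => ⟨hn, fun m hm => h m hm.le⟩⟩
  rcases Nat.lt_or_eq_of_le hm with hm | rfl
  exacts [h m hm, hn ▸ hz]

end Walk

section Approximation

open scoped Pointwise

variable {U : Set (Zd d)}

open Classical in
/-- Finite `M`-connected approximations of `U`, to which Kalikow's condition applies. -/
def reachBall (M : ℕ) (U : Set (Zd d)) : ℕ → Finset (Zd d)
  | 0 => {0}
  | k + 1 => reachBall M U k ∪ {x ∈ reachBall M U k + box d M | x ∈ U}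

lemma zero_mem_reachBall (k : ℕ) : (0 : Zd d) ∈ reachBall M U k := by
  induction k with
  | zero => exact Finset.mem_singleton_self 0
  | succ k ih => exact Finset.mem_union_left _ ih

lemma reachBall_mono : Monotone (reachBall M U) :=
  monotone_nat_of_le_succ fun _ => Finset.subset_union_left

lemma add_mem_reachBall_succ {k : ℕ} {x e : Zd d} (hx : x ∈ reachBall M U k)
    (he : e ∈ box d M) (hxe : x + e ∈ U) : x + e ∈ reachBall M U (k + 1) := by
  classical
  exact Finset.mem_union_right _ (Finset.mem_filter.mpr ⟨Finset.add_mem_add hx he, hxe⟩)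

lemma reachBall_subset (h0 : (0 : Zd d) ∈ U) (k : ℕ) : ↑(reachBall M U k) ⊆ U := by
  classical
  induction k with
  | zero => simpa [reachBall] using h0
  | succ k ih =>
    intro x hx
    rcases Finset.mem_union.mp hx with hx | hx
    exacts [ih hx, (Finset.mem_filter.mp hx).2]

lemma mem_reachBall_of_path {n : ℕ} {p : ℕ → Zd d} (hp0 : p 0 = 0) (hpU : ∀ i ≤ n, p i ∈ U)
    (hstep : ∀ i < n, p (i + 1) - p i ∈ box d M) : ∀ i ≤ n, p i ∈ reachBall M U i := by
  intro i
  induction i with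
  | zero => exact fun _ => hp0 ▸ zero_mem_reachBall 0
  | succ i ih =>
    intro hi
    have hpi : p (i + 1) = p i + (p (i + 1) - p i) := (add_sub_cancel _ _).symm
    rw [hpi]
    exact add_mem_reachBall_succ (ih (by omega)) (hstep i hi) (hpi ▸ hpU (i + 1) hi)

lemma exists_mem_reachBall (hconn : MConnSet M U) {x : Zd d} (hx : x ∈ U) :
    ∃ k, x ∈ reachBall M U k := by
  obtain ⟨n, p, hp0, hpn, hpU, hstep⟩ := hconn x hx
  exact ⟨n, hpn ▸ mem_reachBall_of_path hp0 hpU hstep n le_rfl⟩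

def boxGraph (d M : ℕ) : SimpleGraph (Zd d) := SimpleGraph.fromRel fun x y => y - x ∈ box d M

lemma boxGraph_adj_sub_mem {x y : Zd d} (h : (boxGraph d M).Adj x y) : y - x ∈ box d M := by
  rcases ((SimpleGraph.fromRel_adj _ x y).mp h).2 with h | h
  · exact h
  · simpa using neg_mem_box h

lemma exists_walk_reachBall {k : ℕ} {x : Zd d} (hx : x ∈ reachBall M U k) :
    ∃ p : (boxGraph d M).Walk 0 x, ∀ y ∈ p.support, y ∈ reachBall M U k := by
  classical
  induction k generalizing x with
  | zero =>
    obtain rfl := Finset.mem_singleton.mp hx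
    exact ⟨.nil, by simp [reachBall]⟩
  | succ k ih =>
    have hmono := reachBall_mono (M := M) (U := U) k.le_succ
    rcases Finset.mem_union.mp hx with hold | hnew
    · obtain ⟨p, hp⟩ := ih hold
      exact ⟨p, fun y hy => hmono (hp y hy)⟩
    obtain ⟨y, hy, e, he, rfl⟩ := Finset.mem_add.mp (Finset.mem_filter.mp hnew).1
    obtain ⟨p, hp⟩ := ih hy
    by_cases he0 : e = 0
    · subst he0
      exact ⟨p.copy rfl (add_zero y).symm, fun z hz => hmono (hp z (by simpa using hz))⟩
    have hadj : (boxGraph d M).Adj y (y + e) :=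
      (SimpleGraph.fromRel_adj _ _ _).mpr ⟨by simpa using he0, .inl (by simpa using he)⟩
    refine ⟨p.concat hadj, fun z hz => ?_⟩
    simp only [SimpleGraph.Walk.support_concat, List.mem_append, List.mem_singleton] at hz
    rcases hz with hz | rfl
    exacts [hmono (hp z hz), hx]

lemma SimpleGraph.exists_closedWalk_covering {V : Type*} [DecidableEq V] {G : SimpleGraph V}
    {v : V} {W : Set V} (hreach : ∀ x ∈ W, ∃ p : G.Walk v x, ∀ y ∈ p.support, y ∈ W)
    (hv : v ∈ W) (F : Finset V) (hF : ↑F ⊆ W) :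
    ∃ c : G.Walk v v, (∀ y ∈ c.support, y ∈ W) ∧ ∀ x ∈ F, x ∈ c.support := by
  induction F using Finset.induction_on with
  | empty => exact ⟨.nil, by simpa using hv, by simp⟩
  | insert a F _ ih =>
    obtain ⟨c, hcW, hcF⟩ := ih (fun x hx => hF (Finset.mem_insert_of_mem hx))
    obtain ⟨p, hpW⟩ := hreach a (hF (Finset.mem_insert_self a F))
    refine ⟨c.append (p.append p.reverse), fun y hy => ?_, fun x hx => ?_⟩
    · simp only [Walk.mem_support_append_iff, Walk.support_reverse, List.mem_reverse] at hy
      rcases hy with hy | hy | hy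
      exacts [hcW y hy, hpW y hy, hpW y hy]
    · rcases Finset.mem_insert.mp hx with rfl | hx
      · simp
      · exact (Walk.mem_support_append_iff _ _).mpr (.inl (hcF x hx))

lemma MConn.of_walk {W : Finset (Zd d)} {u v : Zd d} (c : (boxGraph d M).Walk u v)
    (hW : ∀ y ∈ c.support, y ∈ W) (hcov : ∀ x ∈ W, x ∈ c.support) : MConn M W :=
  ⟨c.length, c.getVert, fun i _ => hW _ (c.getVert_mem_support i),
    fun i hi => boxGraph_adj_sub_mem (c.adj_getVert_succ hi), fun x hx => by
      obtain ⟨i, hi, hil⟩ := SimpleGraph.Walk.mem_support_iff_exists_getVert.mp (hcov x hx)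
      exact ⟨i, hil, hi⟩⟩

lemma mconn_reachBall (k : ℕ) : MConn M (reachBall M U k) := by
  classical
  obtain ⟨c, hcW, hcov⟩ := SimpleGraph.exists_closedWalk_covering (G := boxGraph d M)
    (W := ↑(reachBall M U k)) (fun x hx => exists_walk_reachBall hx) (zero_mem_reachBall k) _
    subset_rfl
  exact MConn.of_walk c hcW hcov

end Approximation

section GreenApproximation

variable {U : Set (Zd d)} {ω : Env d}

lemma stayProb_eq_zero_of_notMem_reachBall (hω : ∀ x e, e ∉ box d M → ω x e = 0) {n : ℕ}
    {z : Zd d} (hz : z ∉ reachBall M U n) : stayProb U n z ω = 0 := by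
  induction n generalizing z with
  | zero => exact if_neg (by simpa [reachBall] using hz)
  | succ n ih =>
    simp only [stayProb]
    split_ifs with hzU
    · refine ENNReal.tsum_eq_zero.mpr fun y => ?_
      by_cases he : z - y ∈ box d M
      · have hy : y ∉ reachBall M U n := fun hy =>
          hz (by simpa using add_mem_reachBall_succ hy he (by simpa using hzU))
        rw [ih hy, mul_zero]
      · rw [hω y _ he, ENNReal.ofReal_zero, zero_mul]
    · rfl

lemma stayProb_reachBall_eq (h0 : (0 : Zd d) ∈ U) (hω : ∀ x e, e ∉ box d M → ω x e = 0)
    {n k : ℕ} (hnk : n ≤ k) (z : Zd d) :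
    stayProb (↑(reachBall M U k)) n z ω = stayProb U n z ω := by
  induction n generalizing z with
  | zero => rfl
  | succ n ih =>
    by_cases hz : z ∈ reachBall M U k
    · simp only [stayProb, Finset.mem_coe, if_pos hz,
        if_pos (reachBall_subset h0 k hz), ih (by omega)]
    · rw [stayProb_eq_zero_of_notMem (zero_mem_reachBall k) hz,
        stayProb_eq_zero_of_notMem_reachBall hω fun h => hz (reachBall_mono hnk h)]

lemma monotone_greenFun_reachBall (z : Zd d) (ω : Env d) :
    Monotone fun k => greenFun (↑(reachBall M U k)) z ω :=
  fun _ _ hkl => ENNReal.tsum_le_tsum fun n =>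
    stayProb_mono (Finset.coe_subset.mpr (reachBall_mono hkl)) n z ω

lemma tendsto_greenFun_reachBall (h0 : (0 : Zd d) ∈ U)
    (hω : ∀ x e, e ∉ box d M → ω x e = 0) (z : Zd d) :
    Tendsto (fun k => greenFun (↑(reachBall M U k)) z ω) atTop (𝓝 (greenFun U z ω)) := by
  have hsup : ∀ n, ⨆ k, stayProb (↑(reachBall M U k)) n z ω = stayProb U n z ω := fun n =>
    le_antisymm (iSup_le fun k => stayProb_mono (reachBall_subset h0 k) n z ω)
      (le_iSup_of_le n (stayProb_reachBall_eq h0 hω le_rfl z).ge)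
  have hlim : ⨆ k, greenFun (↑(reachBall M U k)) z ω = greenFun U z ω := by
    simp only [greenFun, ← lintegral_count]
    rw [← lintegral_iSup (fun k => measurable_of_countable _)
      fun _ _ hkl n => stayProb_mono (Finset.coe_subset.mpr (reachBall_mono hkl)) n z ω]
    simp only [hsup]
  exact hlim ▸ tendsto_atTop_iSup (monotone_greenFun_reachBall z ω)

end GreenApproximation

section ExitPosition

variable {U : Set (Zd d)}

lemma lt_exitTime_iff {w : Traj d} (hexit : ∃ j, w j ∉ U) {n : ℕ} :
    n < exitTime U w ↔ w ∈ staysIn U n := by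
  refine ⟨fun h m hm => not_not.mp (Nat.notMem_of_lt_sInf (lt_of_le_of_lt hm h)),
    fun h => lt_of_not_ge fun hle => ?_⟩
  exact Nat.sInf_mem hexit (h _ hle)

lemma mem_stepEvent_iff {w : Traj d} (hexit : ∃ j, w j ∉ U) {n : ℕ} {z e : Zd d} :
    w ∈ stepEvent U n z e ↔ n < exitTime U w ∧ w n = z ∧ w (n + 1) - w n = e := by
  rw [stepEvent, Set.mem_inter_iff, lt_exitTime_iff hexit, Set.mem_ofPred_eq]
  refine and_congr_right fun _ => ⟨fun ⟨hz, he⟩ => ⟨hz, by rw [he, hz, add_sub_cancel_left]⟩,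
    fun ⟨hz, he⟩ => ⟨hz, by rw [← he, hz, add_sub_cancel]⟩⟩

lemma tsum_indicator_stepEvent (ℓ : Fin d → ℝ) {w : Traj d} (hw0 : w 0 = 0)
    (hexit : ∃ j, w j ∉ U) :
    ∑' i : Zd d × ℕ × Zd d, (stepEvent U i.2.1 i.1 i.2.2).indicator (fun _ => dotl i.2.2 ℓ) w
      = dotl (w (exitTime U w)) ℓ := by
  classical
  let step : ℕ → Zd d × ℕ × Zd d := fun n => (w n, n, w (n + 1) - w n)
  have hsupp : ∀ i ∉ (Finset.range (exitTime U w)).image step,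
      (stepEvent U i.2.1 i.1 i.2.2).indicator (fun _ => dotl i.2.2 ℓ) w = 0 := by
    rintro ⟨z, n, e⟩ hi
    refine Set.indicator_of_notMem (fun hw => hi ?_) _
    obtain ⟨hn, hz, he⟩ := (mem_stepEvent_iff hexit).mp hw
    dsimp only at hn hz he
    exact Finset.mem_image.mpr ⟨n, Finset.mem_range.mpr hn, by subst hz he; rfl⟩
  rw [tsum_eq_sum hsupp, Finset.sum_image fun a _ b _ hab => congrArg (·.2.1) hab]
  have hterm : ∀ n ∈ Finset.range (exitTime U w),
      (stepEvent U n (w n) (w (n + 1) - w n)).indicator (fun _ => dotl (w (n + 1) - w n) ℓ) w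
        = dotl (w (n + 1)) ℓ - dotl (w n) ℓ := fun n hn => by
    rw [Set.indicator_of_mem ((mem_stepEvent_iff hexit).mpr
      ⟨Finset.mem_range.mp hn, rfl, rfl⟩), dotl_sub]
  rw [Finset.sum_congr rfl hterm, Finset.sum_range_sub (fun n => dotl (w n) ℓ), hw0]
  simp [dotl]

variable {μ : Measure (Traj d)}

lemma ae_exists_exit (hfin : ∑' n, μ (staysIn U n) ≠ ⊤) : ∀ᵐ w ∂μ, ∃ j, w j ∉ U := by
  have hsub : ∀ n, {w : Traj d | ¬ ∃ j, w j ∉ U} ⊆ staysIn U n :=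
    fun n w hw m _ => not_not.mp fun hm => hw ⟨m, hm⟩
  exact ae_iff.mpr <| le_antisymm (ge_of_tendsto' (ENNReal.tendsto_atTop_zero_of_tsum_ne_top hfin)
    fun n => measure_mono (hsub n)) zero_le

lemma tsum_measure_stepEvent_le :
    ∑' i : Zd d × ℕ × Zd d, μ (stepEvent U i.2.1 i.1 i.2.2) ≤ ∑' n, μ (staysIn U n) := by
  have hstep : ∀ n, ∑' p : Zd d × Zd d, μ (stepEvent U n p.1 p.2) ≤ μ (staysIn U n) := by
    intro n
    have hdisj :
        Pairwise (Function.onFun Disjoint fun p : Zd d × Zd d => stepEvent U n p.1 p.2) := by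
      refine fun a b hab => Set.disjoint_left.mpr fun w ha hb => hab ?_
      have h1 : a.1 = b.1 := ha.2.1.symm.trans hb.2.1
      exact Prod.ext h1 (add_left_cancel ((h1 ▸ ha.2.2.symm).trans hb.2.2))
    rw [← measure_iUnion hdisj fun p => measurableSet_stepEvent U n p.1 p.2]
    exact measure_mono (Set.iUnion_subset fun p => Set.inter_subset_left)
  calc ∑' i : Zd d × ℕ × Zd d, μ (stepEvent U i.2.1 i.1 i.2.2)
      = ∑' (n : ℕ) (p : Zd d × Zd d), μ (stepEvent U n p.1 p.2) := by
        simp only [ENNReal.tsum_prod']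
        rw [ENNReal.tsum_comm]
    _ ≤ ∑' n, μ (staysIn U n) := ENNReal.tsum_le_tsum hstep

lemma hasSum_dotl_mul_measure_stepEvent (ℓ : Fin d → ℝ) (h0 : ∀ᵐ w ∂μ, w 0 = 0)
    (hbox : ∀ n z e, e ∉ box d M → μ (stepEvent U n z e) = 0)
    (hfin : ∑' n, μ (staysIn U n) ≠ ⊤) :
    HasSum (fun i : Zd d × ℕ × Zd d => dotl i.2.2 ℓ * (μ (stepEvent U i.2.1 i.1 i.2.2)).toReal)
      (∫ w, dotl (w (exitTime U w)) ℓ ∂μ) := by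
  have hmass := ne_top_of_le_ne_top hfin tsum_measure_stepEvent_le
  have hbound : ∀ i : Zd d × ℕ × Zd d, |dotl i.2.2 ℓ| * (μ (stepEvent U i.2.1 i.1 i.2.2)).toReal
      ≤ (M * ∑ j, |ℓ j|) * (μ (stepEvent U i.2.1 i.1 i.2.2)).toReal := by
    rintro ⟨z, n, e⟩
    by_cases he : e ∈ box d M
    · exact mul_le_mul_of_nonneg_right (abs_dotl_le he ℓ) ENNReal.toReal_nonneg
    · simp [hbox n z e he]
  let F : Zd d × ℕ × Zd d → Traj d → ℝ := fun i =>
    (stepEvent U i.2.1 i.1 i.2.2).indicator fun _ => dotl i.2.2 ℓ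
  have hmeas : ∀ i : Zd d × ℕ × Zd d, MeasurableSet (stepEvent U i.2.1 i.1 i.2.2) :=
    fun i => measurableSet_stepEvent U _ _ _
  have hint : ∀ (i : Zd d × ℕ × Zd d) (c : ℝ),
      ∫ w, (stepEvent U i.2.1 i.1 i.2.2).indicator (fun _ => c) w ∂μ =
      c * (μ (stepEvent U i.2.1 i.1 i.2.2)).toReal := fun i c => by
    rw [integral_indicator_const _ (hmeas i), smul_eq_mul, mul_comm, measureReal_def]
  have hFint : ∀ i, Integrable (F i) μ := fun i =>
    (integrableOn_const (ne_top_of_le_ne_top hmass (ENNReal.le_tsum i))).integrable_indicator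
      (hmeas i)
  have hsum := hasSum_integral_of_summable_integral_norm hFint <| by
    simp only [F, norm_indicator_eq_indicator_norm, hint, Real.norm_eq_abs]
    exact .of_nonneg_of_le (fun i => by positivity) hbound
      ((ENNReal.summable_toReal hmass).mul_left _)
  simp only [F, hint] at hsum
  rwa [integral_congr_ae (by
    filter_upwards [h0, ae_exists_exit hfin] with w hw0 hexit
    exact (tsum_indicator_stepEvent ℓ hw0 hexit).symm)]

end ExitPosition

section Integrals

variable {α ι : Type*} [MeasurableSpace α] {μ : Measure α} {f : α → ℝ} {C : ℝ}

lemma tendsto_integral_mul_toReal_of_monotone (hf : AEStronglyMeasurable f μ)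
    (hfC : ∀ᵐ x ∂μ, |f x| ≤ C) {g : ℕ → α → ℝ≥0∞} {G : α → ℝ≥0∞}
    (hg : ∀ k, AEMeasurable (g k) μ) (hG : AEMeasurable G μ) (hGfin : ∫⁻ x, G x ∂μ ≠ ⊤)
    (hmono : ∀ᵐ x ∂μ, Monotone fun k => g k x)
    (hlim : ∀ᵐ x ∂μ, Tendsto (fun k => g k x) atTop (𝓝 (G x))) :
    Tendsto (fun k => ∫ x, f x * (g k x).toReal ∂μ) atTop (𝓝 (∫ x, f x * (G x).toReal ∂μ)) := by
  have hGlt := ae_lt_top' hG hGfin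
  refine tendsto_integral_of_dominated_convergence (fun x => C * (G x).toReal)
    (fun k => hf.mul (hg k).ennreal_toReal.aestronglyMeasurable)
    ((integrable_toReal_of_lintegral_ne_top hG hGfin).const_mul C) (fun k => ?_) ?_
  · filter_upwards [hfC, hGlt, hmono, hlim] with x hfx hGx hmx hlx
    rw [norm_mul, Real.norm_eq_abs, Real.norm_eq_abs, abs_of_nonneg ENNReal.toReal_nonneg]
    exact mul_le_mul hfx (ENNReal.toReal_mono hGx.ne (hmx.ge_of_tendsto hlx k))
      ENNReal.toReal_nonneg ((abs_nonneg _).trans hfx)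
  · filter_upwards [hGlt, hlim] with x hGx hlx
    exact ((ENNReal.tendsto_toReal hGx.ne).comp hlx).const_mul (f x)

lemma hasSum_integral_mul_toReal [Countable ι] (hf : AEStronglyMeasurable f μ)
    (hfC : ∀ᵐ x ∂μ, |f x| ≤ C) {g : ι → α → ℝ≥0∞} (hg : ∀ i, AEMeasurable (g i) μ)
    (hfin : ∫⁻ x, ∑' i, g i x ∂μ ≠ ⊤) :
    HasSum (fun i => ∫ x, f x * (g i x).toReal ∂μ) (∫ x, f x * (∑' i, g i x).toReal ∂μ) := by
  have hlt := ae_lt_top' (AEMeasurable.tsum hg) hfin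
  have hsum : ∀ᵐ x ∂μ, HasSum (fun i => (g i x).toReal) (∑' i, g i x).toReal := by
    filter_upwards [hlt] with x hx
    rw [ENNReal.tsum_toReal_eq (ENNReal.ne_top_of_tsum_ne_top hx.ne)]
    exact ENNReal.hasSum_toReal hx.ne
  refine hasSum_integral_of_dominated_convergence (fun i x => C * (g i x).toReal)
    (fun i => hf.mul (hg i).ennreal_toReal.aestronglyMeasurable) (fun i => ?_) ?_ ?_ ?_
  · filter_upwards [hfC] with x hfx
    rw [norm_mul, Real.norm_eq_abs, Real.norm_of_nonneg ENNReal.toReal_nonneg]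
    exact mul_le_mul_of_nonneg_right hfx ENNReal.toReal_nonneg
  · filter_upwards [hsum] with x hx
    exact (hx.mul_left C).summable
  · refine ((integrable_toReal_of_lintegral_ne_top (AEMeasurable.tsum hg) hfin).const_mul
      C).congr ?_
    filter_upwards [hsum] with x hx
    exact (hx.mul_left C).tsum_eq.symm
  · filter_upwards [hsum] with x hx
    exact hx.mul_left (f x)

end Integrals

section Annealed

variable {IP : Measure (Env d)} {P : Env d → Measure (Traj d)} {ann : Measure (Traj d)}
  {U : Set (Zd d)}

lemma ann_ae_start (hP : ∀ᵐ ω ∂IP, IsWalk (P ω) ω 0)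
    (hann : ∀ S, MeasurableSet S → ann S = ∫⁻ ω, P ω S ∂IP) : ∀ᵐ w ∂ann, w 0 = 0 := by
  change ann {w | w 0 = 0}ᶜ = 0
  rw [hann _ (measurableSet_coord_eq 0 0).compl]
  exact (lintegral_congr_ae (hP.mono fun ω hw => ae_iff.mp hw.ae_start)).trans lintegral_zero

lemma lintegral_stayProb (hP : ∀ᵐ ω ∂IP, IsWalk (P ω) ω 0)
    (hann : ∀ S, MeasurableSet S → ann S = ∫⁻ ω, P ω S ∂IP) (h0 : (0 : Zd d) ∈ U) (n : ℕ)
    (z : Zd d) : ∫⁻ ω, stayProb U n z ω ∂IP = ann (staysIn U n ∩ {w | w n = z}) := by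
  rw [hann _ ((measurableSet_staysIn U n).inter (measurableSet_coord_eq n z))]
  exact lintegral_congr_ae (hP.mono fun ω hw => (hw.measure_staysIn_inter h0 n z).symm)

lemma ann_stepEvent (hP : ∀ᵐ ω ∂IP, IsWalk (P ω) ω 0)
    (hann : ∀ S, MeasurableSet S → ann S = ∫⁻ ω, P ω S ∂IP) (h0 : (0 : Zd d) ∈ U) (n : ℕ)
    (z e : Zd d) :
    ann (stepEvent U n z e) = ∫⁻ ω, ENNReal.ofReal (ω z e) * stayProb U n z ω ∂IP := by
  rw [hann _ (measurableSet_stepEvent U n z e)]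
  exact lintegral_congr_ae (hP.mono fun ω hw => hw.measure_stepEvent h0 n z e)

lemma ann_stepEvent_eq_zero (hP : ∀ᵐ ω ∂IP, IsWalk (P ω) ω 0)
    (hgood : ∀ᵐ ω ∂IP, GoodEnv M ω) (hann : ∀ S, MeasurableSet S → ann S = ∫⁻ ω, P ω S ∂IP)
    (h0 : (0 : Zd d) ∈ U) (n : ℕ) (z : Zd d) {e : Zd d} (he : e ∉ box d M) :
    ann (stepEvent U n z e) = 0 := by
  rw [ann_stepEvent hP hann h0]
  exact (lintegral_congr_ae (hgood.mono fun ω hg => by simp [hg.2.2 z e he])).trans lintegral_zero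

lemma tsum_lintegral_greenFun (hP : ∀ᵐ ω ∂IP, IsWalk (P ω) ω 0)
    (hann : ∀ S, MeasurableSet S → ann S = ∫⁻ ω, P ω S ∂IP) (h0 : (0 : Zd d) ∈ U) :
    ∑' z, ∫⁻ ω, greenFun U z ω ∂IP = ∑' n, ann (staysIn U n) := by
  simp only [greenFun]
  rw [tsum_congr fun z => lintegral_tsum fun n => (measurable_stayProb U n z).aemeasurable,
    ENNReal.tsum_comm]
  refine tsum_congr fun n => ?_
  simp only [lintegral_stayProb hP hann h0]
  rw [← measure_iUnion
    (fun a b hab => Set.disjoint_left.mpr fun w ha hb => hab (ha.2.symm.trans hb.2))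
    fun z => (measurableSet_staysIn U n).inter (measurableSet_coord_eq n z)]
  congr 1
  ext w
  simp

lemma hasSum_integral_greenFun (hP : ∀ᵐ ω ∂IP, IsWalk (P ω) ω 0)
    (hann : ∀ S, MeasurableSet S → ann S = ∫⁻ ω, P ω S ∂IP) (h0 : (0 : Zd d) ∈ U)
    (hfin : ∑' n, ann (staysIn U n) ≠ ⊤) :
    HasSum (fun z => ∫ ω, (greenFun U z ω).toReal ∂IP) (∑' n, ann (staysIn U n)).toReal := by
  rw [← tsum_lintegral_greenFun hP hann h0] at hfin ⊢
  have hfin_z := ENNReal.ne_top_of_tsum_ne_top hfin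
  rw [ENNReal.tsum_toReal_eq hfin_z]
  convert ENNReal.hasSum_toReal hfin using 2 with z
  exact integral_toReal (measurable_greenFun U z).aemeasurable
    (ae_lt_top (measurable_greenFun U z) (hfin_z z))

variable {ℓ : Fin d → ℝ}

lemma tsum_dotl_mul_ann_stepEvent (hP : ∀ᵐ ω ∂IP, IsWalk (P ω) ω 0)
    (hgood : ∀ᵐ ω ∂IP, GoodEnv M ω) (hann : ∀ S, MeasurableSet S → ann S = ∫⁻ ω, P ω S ∂IP)
    (h0 : (0 : Zd d) ∈ U) {n : ℕ} {z : Zd d} (hfin : ∫⁻ ω, stayProb U n z ω ∂IP ≠ ⊤) :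
    ∑' e, dotl e ℓ * (ann (stepEvent U n z e)).toReal =
      ∫ ω, driftl M ℓ (shiftE z ω) * (stayProb U n z ω).toReal ∂IP := by
  have hjump : ∀ e, Measurable fun ω : Env d => ω z e := fun e => by fun_prop
  have hterm : ∀ e, (ann (stepEvent U n z e)).toReal =
      ∫ ω, ω z e * (stayProb U n z ω).toReal ∂IP := by
    intro e
    have hmeas : Measurable fun ω : Env d => ENNReal.ofReal (ω z e) * stayProb U n z ω :=
      (hjump e).ennreal_ofReal.mul (measurable_stayProb U n z)
    rw [ann_stepEvent hP hann h0, ← integral_toReal hmeas.aemeasurable]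
    · exact integral_congr_ae (hgood.mono fun ω hg => by
        dsimp only
        rw [ENNReal.toReal_mul, ENNReal.toReal_ofReal (hg.1 z e)])
    · filter_upwards [hP] with ω hw
      exact ENNReal.mul_lt_top ENNReal.ofReal_lt_top
        ((hw.stayProb_le_one h0 n z).trans_lt ENNReal.one_lt_top)
  have hint : ∀ e, Integrable (fun ω => ω z e * (stayProb U n z ω).toReal) IP := fun e =>
    (integrable_toReal_of_lintegral_ne_top (measurable_stayProb U n z).aemeasurable hfin).mono'
      ((hjump e).mul (measurable_stayProb U n z).ennreal_toReal).aestronglyMeasurable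
      (hgood.mono fun ω hg => by
        rw [norm_mul, Real.norm_of_nonneg (hg.1 z e), Real.norm_of_nonneg ENNReal.toReal_nonneg]
        exact mul_le_of_le_one_left ENNReal.toReal_nonneg (hg.le_one z e))
  rw [tsum_eq_sum (s := box d M) fun e he => by
    rw [hterm, integral_eq_zero_of_ae (hgood.mono fun ω hg => by simp [hg.2.2 z e he]), mul_zero]]
  simp only [hterm, ← integral_const_mul]
  rw [← integral_finsetSum _ fun e _ => (hint e).const_mul _]
  refine integral_congr_ae (ae_of_all _ fun ω => ?_)
  simp only [driftl_shiftE, Finset.sum_mul, mul_assoc]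

lemma hasSum_dotl_mul_ann_stepEvent (hP : ∀ᵐ ω ∂IP, IsWalk (P ω) ω 0)
    (hgood : ∀ᵐ ω ∂IP, GoodEnv M ω) (hann : ∀ S, MeasurableSet S → ann S = ∫⁻ ω, P ω S ∂IP)
    (h0 : (0 : Zd d) ∈ U) {z : Zd d} (hfin : ∫⁻ ω, greenFun U z ω ∂IP ≠ ⊤)
    (hc : Summable fun q : ℕ × Zd d => dotl q.2 ℓ * (ann (stepEvent U q.1 z q.2)).toReal) :
    HasSum (fun q : ℕ × Zd d => dotl q.2 ℓ * (ann (stepEvent U q.1 z q.2)).toReal)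
      (∫ ω, driftl M ℓ (shiftE z ω) * (greenFun U z ω).toReal ∂IP) := by
  have hfin_n : ∀ n, ∫⁻ ω, stayProb U n z ω ∂IP ≠ ⊤ := fun n =>
    ne_top_of_le_ne_top hfin (lintegral_mono fun ω => ENNReal.le_tsum n)
  have htime := hasSum_integral_mul_toReal (measurable_driftl_shiftE ℓ z).aestronglyMeasurable
    (hgood.mono fun ω hg => hg.abs_driftl_shiftE_le ℓ z)
    (fun n => (measurable_stayProb U n z).aemeasurable) hfin
  rw [hc.hasSum_iff, hc.tsum_prod' hc.prod_factor]
  simp only [tsum_dotl_mul_ann_stepEvent hP hgood hann h0 (hfin_n _)]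
  exact htime.tsum_eq

end Annealed

section Kalikow

variable {IP : Measure (Env d)} {P : Env d → Measure (Traj d)} {U : Set (Zd d)}
  {ℓ : Fin d → ℝ}

lemma kalikow_greenFun {ε : ℝ} (hP : ∀ᵐ ω ∂IP, IsWalk (P ω) ω 0)
    (hgood : ∀ᵐ ω ∂IP, GoodEnv M ω) (hkal : KalikowCond IP P M ℓ ε) (h0 : (0 : Zd d) ∈ U)
    (hconn : MConnSet M U) {z : Zd d} (hz : z ∈ U) (hfin : ∫⁻ ω, greenFun U z ω ∂IP ≠ ⊤) :
    ε * ∫ ω, (greenFun U z ω).toReal ∂IP ≤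
      ∫ ω, driftl M ℓ (shiftE z ω) * (greenFun U z ω).toReal ∂IP := by
  have hlim : ∀ {f : Env d → ℝ} {C : ℝ}, AEStronglyMeasurable f IP → (∀ᵐ ω ∂IP, |f ω| ≤ C) →
      Tendsto (fun k => ∫ ω, f ω * (greenFun (↑(reachBall M U k)) z ω).toReal ∂IP) atTop
        (𝓝 (∫ ω, f ω * (greenFun U z ω).toReal ∂IP)) := fun hf hfC =>
    tendsto_integral_mul_toReal_of_monotone hf hfC
      (fun _ => (measurable_greenFun _ z).aemeasurable) (measurable_greenFun U z).aemeasurable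
      hfin (ae_of_all _ fun ω => monotone_greenFun_reachBall z ω)
      (hgood.mono fun ω hg => tendsto_greenFun_reachBall h0 hg.2.2 z)
  have hconst := hlim (f := fun _ => ε) aestronglyMeasurable_const (ae_of_all _ fun _ => le_rfl)
  simp only [integral_const_mul] at hconst
  have hdrift := hlim (measurable_driftl_shiftE ℓ z).aestronglyMeasurable
    (hgood.mono fun ω hg => hg.abs_driftl_shiftE_le ℓ z)
  obtain ⟨k0, hk0⟩ := exists_mem_reachBall hconn hz
  refine le_of_tendsto_of_tendsto hconst hdrift (eventually_atTop.mpr ⟨k0, fun k hk => ?_⟩)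
  have hzk : z ∈ reachBall M U k := reachBall_mono hk hk0
  have hgreen : ∀ᵐ ω ∂IP, exitGreen (P ω) (↑(reachBall M U k)) z =
      greenFun (↑(reachBall M U k)) z ω :=
    hP.mono fun ω hw => hw.exitGreen_eq (zero_mem_reachBall k) hzk
  have hkalk := hkal.2 _ (zero_mem_reachBall k) (mconn_reachBall k) z hzk
  rwa [integral_congr_ae (hgreen.mono fun ω h => congrArg ENNReal.toReal h),
    integral_congr_ae (hgreen.mono fun ω h => congrArg (driftl M ℓ (shiftE z ω) * ·.toReal) h)]
    at hkalk

end Kalikow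

end

theorem kalikow_ballistic_general {d M : ℕ} (ℓ : Fin d → ℝ) (ε : ℝ)
    (IP : Measure (Env d))
    (P : Env d → Measure (Traj d)) (hP : ∀ᵐ ω ∂IP, IsWalk (P ω) ω 0)
    (hgood : ∀ᵐ ω ∂IP, GoodEnv M ω)
    (ann : Measure (Traj d))
    (hann : ∀ S : Set (Traj d), MeasurableSet S → ann S = ∫⁻ ω, P ω S ∂IP)
    (hkal : KalikowCond IP P M ℓ ε)
    (U : Set (Zd d)) (h0U : (0 : Zd d) ∈ U) (hconn : MConnSet M U)
    (hfin : (∑' n : ℕ, ann {w | ∀ m ≤ n, w m ∈ U}) ≠ ⊤) :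
    ε * (∑' n : ℕ, ann {w | ∀ m ≤ n, w m ∈ U}).toReal ≤
      ∫ w, dotl (w (exitTime U w)) ℓ ∂ann := by
  have hGfin : ∀ z, ∫⁻ ω, greenFun U z ω ∂IP ≠ ⊤ :=
    ENNReal.ne_top_of_tsum_ne_top (tsum_lintegral_greenFun hP hann h0U ▸ hfin)
  have hexit := hasSum_dotl_mul_measure_stepEvent ℓ (ann_ae_start hP hann)
    (fun n z _ he => ann_stepEvent_eq_zero hP hgood hann h0U n z he) hfin
  have hsites := hexit.prod_fiberwise fun z =>
    hasSum_dotl_mul_ann_stepEvent hP hgood hann h0U (hGfin z) (hexit.summable.prod_factor z)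
  refine hasSum_le (fun z => ?_) ((hasSum_integral_greenFun hP hann h0U hfin).mul_left ε) hsites
  by_cases hz : z ∈ U
  · exact kalikow_greenFun hP hgood hkal h0U hconn hz (hGfin z)
  · simp [greenFun, stayProb_eq_zero_of_notMem h0U hz]

/-- under Kalikow's condition with constant `ε` in direction `ℓ`,
for any `M`-connected `U ∋ 0` with `E_0(T_U) < ∞`, one has
`E_0(X_{T_U}·ℓ) ≥ ε E_0(T_U)`.  (Here `E_0(T_U) = Σ_n P_0(T_U > n)`.) -/
theorem kalikow_ballistic {d M : ℕ} (ℓ : Fin d → ℝ) (ε : ℝ)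
    (IP : Measure (Env d)) [IsProbabilityMeasure IP]
    (P : Env d → Measure (Traj d)) (hP : ∀ᵐ ω ∂IP, IsWalk (P ω) ω 0)
    (hgood : ∀ᵐ ω ∂IP, GoodEnv M ω)
    (ann : Measure (Traj d))
    (hann : ∀ S : Set (Traj d), MeasurableSet S → ann S = ∫⁻ ω, P ω S ∂IP)
    (hkal : KalikowCond IP P M ℓ ε)
    (U : Set (Zd d)) (h0U : (0 : Zd d) ∈ U) (hconn : MConnSet M U)
    (hfin : (∑' n : ℕ, ann {w | ∀ m ≤ n, w m ∈ U}) ≠ ⊤) :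
    ε * (∑' n : ℕ, ann {w | ∀ m ≤ n, w m ∈ U}).toReal ≤
      ∫ w, dotl (w (exitTime U w)) ℓ ∂ann :=
  kalikow_ballistic_general ℓ ε IP P hP hgood ann hann hkal U h0U hconn hfin
end
end

section
/- (Kozlov's lemma, mutual absolute continuity part) Let IP be an ergodic shift-invariant measure on environments over Z^d satisfying the weak ellipticity condition. If IP_∞ is a probability measure invariant for the environment process (T^{X_n}ω)_{n≥0} and absolutely continuous with respect to IP, then IP and IP_∞ are mutually absolutely continuous. -/
open MeasureTheory Filter Set
open scoped ENNReal

noncomputable section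

/-!
Let `G = dIP_∞/dIP` and `Z = {G = 0}`, an `IP_∞`-null set. Invariance of `IP_∞` means the
environment process started from `IP_∞` never steps into `Z`; hence, `IP`-a.s. on `{G > 0}`,
`T^e ω ∉ Z` whenever `π_{0e}(ω) > 0`, i.e. `T^{-e} Z ⊆ Z` a.e. for such `e`. As `T^e` preserves
`IP`, this inclusion is an a.e. equality, and weak ellipticity supplies such an `e = ±e_i` along
every axis, so `Z` is a.e. invariant under all shifts. By ergodicity `Z` is null or conull; it
cannot be conull since `IP_∞ ≪ IP` has mass one. So `G > 0` `IP`-a.e., that is, `IP ≪ IP_∞`.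
-/

section Shift

variable {d : ℕ}

lemma shiftE_zero : shiftE (0 : Zd d) = id := by
  funext ω x e
  simp [shiftE]

lemma shiftE_shiftE (j k : Zd d) (ω : Env d) : shiftE j (shiftE k ω) = shiftE (j + k) ω := by
  funext x e
  simp only [shiftE]
  congr 1
  abel

lemma measurable_shiftE (k : Zd d) : Measurable (shiftE k : Env d → Env d) :=
  measurable_pi_lambda _ fun x => measurable_pi_apply (k + x)

instance shiftAction : AddAction (Zd d) (Env d) where
  vadd := shiftE
  zero_vadd ω := congrFun shiftE_zero ω
  add_vadd j k ω := (shiftE_shiftE j k ω).symm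

lemma vadd_eq_shiftE (k : Zd d) (ω : Env d) : k +ᵥ ω = shiftE k ω := rfl

instance : MeasurableConstVAdd (Zd d) (Env d) := ⟨measurable_shiftE⟩

lemma ShiftInv.vaddInvariantMeasure {IP : Measure (Env d)} (h : ShiftInv IP) :
    VAddInvariantMeasure (Zd d) (Env d) IP where
  measure_preimage_vadd k s hs := by
    change IP (shiftE k ⁻¹' s) = IP s
    rw [← Measure.map_apply (measurable_shiftE k) hs, h k]

lemma ErgEnv.ergodicVAdd {IP : Measure (Env d)} [IsProbabilityMeasure IP] (h : ErgEnv IP) :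
    ErgodicVAdd (Zd d) (Env d) IP where
  toVAddInvariantMeasure := h.1.vaddInvariantMeasure
  aeconst_of_forall_preimage_vadd_ae_eq {s} hs hs_inv := by
    set t := ⋂ k : Zd d, (k +ᵥ ·) ⁻¹' s
    have ht : MeasurableSet t := .iInter fun k => measurable_const_vadd k hs
    have ht_inv : ∀ k : Zd d, shiftE k ⁻¹' t = t := by
      intro k
      ext ω
      simp only [t, mem_preimage, mem_iInter, vadd_eq_shiftE, shiftE_shiftE]
      exact ⟨fun hω j => by simpa using hω (j - k), fun hω j => hω (j + k)⟩
    have hts : t =ᵐ[IP] s := by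
      have hall := ae_all_iff.2 fun k => eventuallyEq_set.1 (hs_inv k)
      refine eventuallyEq_set.2 ?_
      filter_upwards [hall] with ω hω
      simp only [t, mem_iInter]
      exact ⟨fun h => (hω 0).1 (h 0), fun h k => (hω k).2 h⟩
    refine EventuallyConst.congr ?_ hts
    rcases h.2 t ht ht_inv with h0 | h1
    · exact eventuallyConst_set'.2 (.inl (ae_eq_empty.2 h0))
    · exact eventuallyConst_set'.2 (.inr (ae_eq_univ.2 ((prob_compl_eq_zero_iff ht).2 h1)))

end Shift

lemma AddAction.mem_aestabilizer_of_preimage_ae_le {G α : Type*} [AddGroup G] [AddAction G α]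
    [MeasurableSpace α] [MeasurableConstVAdd G α] {μ : Measure α} [IsFiniteMeasure μ]
    [VAddInvariantMeasure G α μ] {s : Set α} (hs : MeasurableSet s) {g : G}
    (h : (g +ᵥ ·) ⁻¹' s ≤ᵐ[μ] s) : g ∈ AddAction.aestabilizer G μ s := by
  have hpre : (g +ᵥ ·) ⁻¹' s =ᵐ[μ] s :=
    ae_eq_of_ae_subset_of_measure_ge h (measure_preimage_vadd μ g s).ge
      (measurable_const_vadd g hs).nullMeasurableSet (measure_ne_top _ _)
  rw [← neg_mem_iff, AddAction.mem_aestabilizer, ← preimage_vadd]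
  exact hpre

lemma AddSubgroup.eq_top_of_forall_single_one_mem {ι : Type*} [Fintype ι] [DecidableEq ι]
    (H : AddSubgroup (ι → ℤ)) (h : ∀ i, Pi.single i 1 ∈ H) : H = ⊤ := by
  refine eq_top_iff.2 fun k _ => ?_
  rw [← Finset.univ_sum_single k]
  refine sum_mem fun i _ => ?_
  convert zsmul_mem (h i) (k i) using 1
  simp [← Pi.single_smul]

section Kozlov

variable {d : ℕ}

lemma dotl_single (i : Fin d) (c : ℤ) (ℓ : Fin d → ℝ) : dotl (Pi.single i c) ℓ = c * ℓ i := by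
  simp [dotl, Pi.single_apply]

lemma WeakElliptic.exists_ae_pos_single {IP : Measure (Env d)} {ℓ : Fin d → ℝ}
    (hell : WeakElliptic IP ℓ) (i : Fin d) :
    ∃ ε : ℤ, (ε = 1 ∨ ε = -1) ∧ ∀ᵐ ω ∂IP, 0 < ω 0 (Pi.single i ε) := by
  obtain ⟨ε, hε, hdot⟩ : ∃ ε : ℤ, (ε = 1 ∨ ε = -1) ∧ 0 ≤ ε * ℓ i := by
    by_cases h : 0 ≤ ℓ i
    · exact ⟨1, .inl rfl, by simpa⟩
    · exact ⟨-1, .inr rfl, by push_cast; linarith⟩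
  refine ⟨ε, hε, hell.mono fun ω hω => hω _ ?_ (by rwa [dotl_single])⟩
  rcases hε with rfl | rfl <;> simp [Pi.single_apply]

lemma WeakElliptic.aestabilizer_eq_top {IP : Measure (Env d)} [IsFiniteMeasure IP]
    [VAddInvariantMeasure (Zd d) (Env d) IP] {ℓ : Fin d → ℝ} (hell : WeakElliptic IP ℓ)
    {Z : Set (Env d)} (hZ : MeasurableSet Z)
    (hstep : ∀ᵐ ω ∂IP, ∀ e, 0 < ω 0 e → shiftE e ω ∈ Z → ω ∈ Z) :
    AddAction.aestabilizer (Zd d) IP Z = ⊤ := by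
  refine AddSubgroup.eq_top_of_forall_single_one_mem _ fun i => ?_
  obtain ⟨ε, hε, hpos⟩ := hell.exists_ae_pos_single i
  have hmem : Pi.single i ε ∈ AddAction.aestabilizer (Zd d) IP Z :=
    AddAction.mem_aestabilizer_of_preimage_ae_le hZ <| by
      filter_upwards [hpos, hstep] with ω hω hωZ using hωZ _ hω
  rcases hε with rfl | rfl
  · exact hmem
  · simpa [Pi.single_neg] using neg_mem hmem

lemma EnvInvariant.ae_shiftE_notMem {M : ℕ} {IPinf : Measure (Env d)}
    (hinv : EnvInvariant M IPinf) (hgood : ∀ᵐ ω ∂IPinf, GoodEnv M ω) {Z : Set (Env d)}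
    (hZ : MeasurableSet Z) (hZ0 : IPinf Z = 0) :
    ∀ᵐ ω ∂IPinf, ∀ e, 0 < ω 0 e → shiftE e ω ∉ Z := by
  have hmeas : Measurable fun ω : Env d =>
      ∑ e ∈ box d M, ENNReal.ofReal (ω 0 e) * Z.indicator 1 (shiftE e ω) := by
    refine Finset.measurable_sum _ fun e _ => Measurable.mul ?_ ?_
    · exact ENNReal.measurable_ofReal.comp ((measurable_pi_apply e).comp (measurable_pi_apply 0))
    · exact (measurable_one.indicator hZ).comp (measurable_shiftE e)
  have hzero := (lintegral_eq_zero_iff hmeas).1 ((hinv Z hZ).trans hZ0)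
  filter_upwards [hzero, hgood] with ω hω hgω e he hmem
  have he_box : e ∈ box d M := by_contra fun h => he.ne' (hgω.2.2 0 e h)
  have hterm := Finset.sum_eq_zero_iff.1 hω e he_box
  simp only [indicator_of_mem hmem, Pi.one_apply, mul_one, ENNReal.ofReal_eq_zero] at hterm
  exact hterm.not_gt he

end Kozlov

/-- Kozlov's lemma, mutual absolute continuity: if `IP` is ergodic,
shift invariant, finite range and weakly elliptic, and `IP_∞` is an invariant
probability measure for the environment process with `IP_∞ ≪ IP`, then `IP ≪ IP_∞`
(so `IP` and `IP_∞` are mutually absolutely continuous). -/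
theorem kozlov_mutual_ac {d M : ℕ} (ℓ : Fin d → ℝ)
    (IP : Measure (Env d)) [IsProbabilityMeasure IP]
    (herg : ErgEnv IP) (hgood : ∀ᵐ ω ∂IP, GoodEnv M ω)
    (hell : WeakElliptic IP ℓ)
    (IPinf : Measure (Env d)) [IsProbabilityMeasure IPinf]
    (hinv : EnvInvariant M IPinf) (hac : IPinf ≪ IP) :
    IP ≪ IPinf := by
  have := herg.ergodicVAdd
  set G := IPinf.rnDeriv IP
  have hG : IP.withDensity G = IPinf := Measure.withDensity_rnDeriv_eq _ _ hac
  have hGm : Measurable G := Measure.measurable_rnDeriv _ _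
  set Z := {ω | G ω = 0}
  have hZ : MeasurableSet Z := hGm (measurableSet_singleton 0)
  have hIPinfZ : IPinf Z = 0 :=
    measure_eq_zero_iff_ae_notMem.2 ((Measure.rnDeriv_pos hac).mono fun _ h => h.ne')
  have hstep : ∀ᵐ ω ∂IP, ∀ e, 0 < ω 0 e → shiftE e ω ∈ Z → ω ∈ Z := by
    have h := hinv.ae_shiftE_notMem (hac.ae_le hgood) hZ hIPinfZ
    rw [← hG, ae_withDensity_iff hGm] at h
    filter_upwards [h] with ω hω e he hmem
    by_contra hωZ
    exact hω hωZ e he hmem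
  have hZ_const := AddAction.aeconst_of_aestabilizer_eq_top (Zd d) hZ.nullMeasurableSet
    (hell.aestabilizer_eq_top hZ hstep)
  rcases eventuallyConst_set'.1 hZ_const with hnull | hfull
  · rw [← hG]
    exact withDensity_absolutelyContinuous' hGm.aemeasurable
      (measure_eq_zero_iff_ae_notMem.1 (ae_eq_empty.1 hnull))
  · have h := measure_congr (hac.ae_eq hfull)
    rw [hIPinfZ, measure_univ] at h
    exact absurd h zero_ne_one
end
end

section
/- If the law of large numbers X_n/n → v holds P_0-a.s. with deterministic v, and Kalikow's condition in direction ℓ holds with constant ε (so that E_0(X_{T_U}·ℓ) ≥ ε E_0(T_U) for slabs U_L = {x : x·ℓ ≤ L}), then v ≠ 0; in fact v·ℓ > 0. -/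
open MeasureTheory Filter Set
open scoped ENNReal

noncomputable section

/-- the exit time of the slab `U_L = {x : x·ℓ ≤ L}`. -/
def exitSlab {d : ℕ} (ℓ : Fin d → ℝ) (L : ℝ) (w : Traj d) : ℕ :=
  sInf {n | L < dotl (w n) ℓ}

/-! Jumps have range `M`, so the walk leaves the slab `{x · ℓ ≤ L}` at a point with
`x · ℓ ≤ L + M ∑ᵢ |ℓᵢ|`; ballisticity then bounds `ε E(T_{U_L})` by `L + M ∑ᵢ |ℓᵢ|`.
If `v · ℓ ≤ 0`, the law of large numbers gives `r > 0` and `k` such that with probability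
more than `r` the walk stays below `n ↦ δ n + k`, where `δ = ε r / 2`. On that event it needs
more than `(L - k) / δ` steps to leave the slab, so `ε E(T_{U_L}) ≥ 2 (L - k)`, which beats
`L + M ∑ᵢ |ℓᵢ|` for large `L`. -/
open scoped NNReal Topology

def IsMixture {Ω α : Type*} [MeasurableSpace Ω] [MeasurableSpace α] (μ : Measure α)
    (IP : Measure Ω) (P : Ω → Measure α) : Prop :=
  ∀ S : Set α, MeasurableSet S → μ S = ∫⁻ ω, P ω S ∂IP

namespace IsMixture

variable {Ω α : Type*} [MeasurableSpace Ω] [MeasurableSpace α] {μ : Measure α}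
  {IP : Measure Ω} {P : Ω → Measure α}

lemma isProbabilityMeasure [IsProbabilityMeasure IP] (h : IsMixture μ IP P)
    (hP : ∀ᵐ ω ∂IP, IsProbabilityMeasure (P ω)) : IsProbabilityMeasure μ :=
  ⟨by rw [h _ MeasurableSet.univ, lintegral_congr_ae (hP.mono fun ω hω => hω.measure_univ),
    lintegral_one, measure_univ]⟩

lemma ae_of_ae (h : IsMixture μ IP P) {p : α → Prop} (hp : MeasurableSet {a | p a})
    (hae : ∀ᵐ ω ∂IP, ∀ᵐ a ∂P ω, p a) : ∀ᵐ a ∂μ, p a := by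
  refine ae_iff.2 ((h _ hp.compl).trans ?_)
  exact (lintegral_congr_ae (hae.mono fun ω hω => ae_iff.1 hω)).trans lintegral_zero

end IsMixture

variable {d : ℕ}

namespace IsWalk

variable {μ : Measure (Traj d)} {ω : Env d} {x0 : Zd d}

lemma ae_start_s19 (h : IsWalk μ ω x0) : ∀ᵐ w ∂μ, w 0 = x0 := by
  have := h.1
  have hm : MeasurableSet {w : Traj d | w 0 = x0} :=
    measurableSet_eq_fun (measurable_pi_apply 0) measurable_const
  exact (ae_iff_measure_eq hm.nullMeasurableSet).2 (h.2.1.trans measure_univ.symm)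

lemma ae_increment_mem (h : IsWalk μ ω x0) {B : Set (Zd d)} (hB : ∀ x e, e ∉ B → ω x e = 0) :
    ∀ᵐ w ∂μ, ∀ n, w (n + 1) - w n ∈ B := by
  refine ae_all_iff.2 fun n => ?_
  have hstep : ∀ i j : Zd d, ∀ᵐ w ∂μ, w n = i → w (n + 1) = j → j - i ∈ B := by
    intro i j
    by_cases hij : j - i ∈ B
    · exact ae_of_all _ fun _ _ _ => hij
    · have hnull := h.2.2 n univ MeasurableSet.univ (fun _ _ _ => Iff.rfl) i j
      rw [univ_inter, univ_inter, hB i _ hij, ENNReal.ofReal_zero, zero_mul] at hnull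
      exact ae_iff.2 (measure_mono_null (fun w hw => by simp_all) hnull)
  filter_upwards [ae_all_iff.2 fun i => ae_all_iff.2 (hstep i)] with w hw
  exact hw _ _ rfl rfl

end IsWalk

lemma dotl_add (x y : Zd d) (ℓ : Fin d → ℝ) : dotl (x + y) ℓ = dotl x ℓ + dotl y ℓ := by
  simp only [dotl, Pi.add_apply, Int.cast_add, add_mul, Finset.sum_add_distrib]

lemma dotl_zero_left (ℓ : Fin d → ℝ) : dotl (0 : Zd d) ℓ = 0 := by
  simp [dotl]

lemma dotl_le_of_mem_box {M : ℕ} {e : Zd d} (he : e ∈ box d M) (ℓ : Fin d → ℝ) :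
    dotl e ℓ ≤ M * ∑ i, |ℓ i| := by
  rw [Finset.mul_sum]
  refine Finset.sum_le_sum fun i _ => ?_
  have hei : |(e i : ℝ)| ≤ M := by
    obtain ⟨hlo, hhi⟩ := Finset.mem_Icc.mp he
    exact abs_le.2 ⟨by exact_mod_cast hlo i, by exact_mod_cast hhi i⟩
  calc (e i : ℝ) * ℓ i ≤ |(e i : ℝ)| * |ℓ i| := (le_abs_self _).trans (abs_mul _ _).le
    _ ≤ M * |ℓ i| := by gcongr

lemma tendsto_dotl_div {x : ℕ → Zd d} {v : Fin d → ℝ}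
    (h : ∀ i, Tendsto (fun n : ℕ => (x n i : ℝ) / n) atTop (𝓝 (v i))) (ℓ : Fin d → ℝ) :
    Tendsto (fun n : ℕ => dotl (x n) ℓ / n) atTop (𝓝 (∑ i, v i * ℓ i)) := by
  simpa only [dotl, Finset.sum_div, div_mul_eq_mul_div] using
    tendsto_finsetSum Finset.univ fun i _ => (h i).mul_const (ℓ i)

lemma apply_sInf_lt_le_add {f : ℕ → ℝ} {L c : ℝ} (h0 : f 0 ≤ L) (hc : 0 ≤ c)
    (hf : ∀ n, f (n + 1) ≤ f n + c) : f (sInf {n | L < f n}) ≤ L + c := by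
  cases hT : sInf {n | L < f n} with
  | zero => linarith
  | succ m =>
    have hm : ¬ L < f m := Nat.notMem_of_lt_sInf (by rw [hT]; exact Nat.lt_succ_self m)
    linarith [hf m]

lemma dotl_exitSlab_le {M : ℕ} (ℓ : Fin d → ℝ) {L : ℝ} (hL : 0 ≤ L) {w : Traj d} (hw0 : w 0 = 0)
    (hw : ∀ n, w (n + 1) - w n ∈ box d M) :
    dotl (w (exitSlab ℓ L w)) ℓ ≤ L + M * ∑ i, |ℓ i| := by
  refine apply_sInf_lt_le_add (f := fun n => dotl (w n) ℓ) (by simpa [hw0, dotl_zero_left])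
    (by positivity) fun n => ?_
  rw [← sub_add_cancel (w (n + 1)) (w n), dotl_add]
  linarith [dotl_le_of_mem_box (hw n) ℓ]

lemma integral_dotl_exitSlab_le {M : ℕ} (ℓ : Fin d → ℝ) {μ : Measure (Traj d)}
    [IsProbabilityMeasure μ] (hμ : ∀ᵐ w ∂μ, w 0 = 0 ∧ ∀ n, w (n + 1) - w n ∈ box d M)
    {L : ℝ} (hL : 0 ≤ L) :
    ∫ w, dotl (w (exitSlab ℓ L w)) ℓ ∂μ ≤ L + M * ∑ i, |ℓ i| := by
  by_cases hint : Integrable (fun w => dotl (w (exitSlab ℓ L w)) ℓ) μ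
  · refine (integral_mono_ae hint (integrable_const (L + M * ∑ i, |ℓ i|)) ?_).trans_eq (by simp)
    filter_upwards [hμ] with w hw using dotl_exitSlab_le ℓ hL hw.1 hw.2
  · rw [integral_undef hint]
    positivity

lemma exists_forall_le_mul_add_of_tendsto_div {y : ℕ → ℝ} {a δ : ℝ}
    (h : Tendsto (fun n : ℕ => y n / n) atTop (𝓝 a)) (ha : a < δ) :
    ∃ k : ℕ, ∀ n, y n ≤ δ * n + k := by
  have hev : ∀ᶠ n : ℕ in atTop, y n - δ * n ≤ 0 := by
    filter_upwards [h.eventually_lt_const ha, eventually_gt_atTop 0] with n hlt hn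
    rw [div_lt_iff₀ (by exact_mod_cast hn)] at hlt
    linarith
  obtain ⟨C, hC⟩ := (isBoundedUnder_of_eventually_le hev).bddAbove_range
  obtain ⟨k, hk⟩ := exists_nat_ge C
  exact ⟨k, fun n => by linarith [hC (mem_range_self n)]⟩

lemma exists_lt_measure_forall_le_mul_add {Ω : Type*} [MeasurableSpace Ω] {μ : Measure Ω}
    {Y : Ω → ℕ → ℝ} {a δ : ℝ} (ha : a < δ) {r : ℝ≥0∞}
    (hr : r < μ {ω | Tendsto (fun n : ℕ => Y ω n / n) atTop (𝓝 a)}) :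
    ∃ k : ℕ, r < μ {ω | ∀ n, Y ω n ≤ δ * n + k} := by
  have hmono : Monotone fun k : ℕ => {ω | ∀ n, Y ω n ≤ δ * n + k} :=
    fun k k' hk ω hω n => (hω n).trans (by gcongr)
  have hsub : {ω | Tendsto (fun n : ℕ => Y ω n / n) atTop (𝓝 a)} ⊆
      ⋃ k : ℕ, {ω | ∀ n, Y ω n ≤ δ * n + k} :=
    fun ω hω => mem_iUnion.2 (exists_forall_le_mul_add_of_tendsto_div hω ha)
  rw [← lt_iSup_iff, ← hmono.measure_iUnion]
  exact hr.trans_le (measure_mono hsub)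

/-- `∑ₙ μ(T_{U_L} > n) = E(T_{U_L})`, for the exit time `T_{U_L}` of the slab `{x · ℓ ≤ L}`. -/
def expectedExitTime (μ : Measure (Traj d)) (ℓ : Fin d → ℝ) (L : ℝ) : ℝ≥0∞ :=
  ∑' n : ℕ, μ {w | ∀ m ≤ n, dotl (w m) ℓ ≤ L}

lemma mul_le_expectedExitTime {μ : Measure (Traj d)} {ℓ : Fin d → ℝ} {δ L : ℝ} {k K : ℕ}
    (hδ : 0 ≤ δ) (hL : δ * K + k ≤ L) :
    ((K + 1 : ℕ) : ℝ≥0∞) * μ {w | ∀ n, dotl (w n) ℓ ≤ δ * n + k} ≤ expectedExitTime μ ℓ L := by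
  calc ((K + 1 : ℕ) : ℝ≥0∞) * μ {w | ∀ n, dotl (w n) ℓ ≤ δ * n + k}
      = ∑ n ∈ Finset.range (K + 1), μ {w | ∀ n, dotl (w n) ℓ ≤ δ * n + k} := by simp
    _ ≤ ∑ n ∈ Finset.range (K + 1), μ {w | ∀ m ≤ n, dotl (w m) ℓ ≤ L} := by
      refine Finset.sum_le_sum fun n hn => measure_mono fun w hw m hm => (hw m).trans ?_
      have hmK : (m : ℝ) ≤ K := by
        exact_mod_cast hm.trans (Nat.lt_succ_iff.1 (Finset.mem_range.1 hn))
      nlinarith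
    _ ≤ expectedExitTime μ ℓ L := ENNReal.sum_le_tsum _

lemma pos_of_expectedExitTime_le {μ : Measure (Traj d)} {ℓ : Fin d → ℝ} {ε c a : ℝ} (hε : 0 < ε)
    (hT : ∀ L : ℕ, 1 ≤ L →
      expectedExitTime μ ℓ L ≠ ⊤ ∧ ε * (expectedExitTime μ ℓ L).toReal ≤ L + c)
    (ha : 0 < μ {w | Tendsto (fun n : ℕ => dotl (w n) ℓ / n) atTop (𝓝 a)}) : 0 < a := by
  by_contra! ha0
  obtain ⟨r, hr0, hr⟩ := ENNReal.lt_iff_exists_nnreal_btwn.1 ha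
  have hr0' : (0 : ℝ) < r := by exact_mod_cast hr0
  set δ : ℝ := ε * r / 2
  have hδ : 0 < δ := by positivity
  obtain ⟨k, hk⟩ := exists_lt_measure_forall_le_mul_add (μ := μ)
    (Y := fun w n => dotl (w n) ℓ) (ha0.trans_lt hδ) hr
  have hbound : ∀ K : ℕ, 2 * δ * (K + 1) ≤ δ * K + k + 2 + c := by
    intro K
    have hL : δ * K + k ≤ (k + 1 + ⌈δ * K⌉₊ : ℕ) := by
      push_cast
      linarith [Nat.le_ceil (δ * K)]
    obtain ⟨hfin, hexit⟩ := hT (k + 1 + ⌈δ * K⌉₊) (by omega)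
    have htime : (K + 1) * (r : ℝ) ≤ (expectedExitTime μ ℓ (k + 1 + ⌈δ * K⌉₊ : ℕ)).toReal := by
      have := ENNReal.toReal_mono hfin
        ((mul_le_mul_right hk.le _).trans (mul_le_expectedExitTime hδ.le hL))
      rwa [ENNReal.toReal_mul, ENNReal.toReal_natCast, ENNReal.coe_toReal, Nat.cast_succ] at this
    calc 2 * δ * (K + 1) = ε * ((K + 1) * r) := by ring
      _ ≤ ε * (expectedExitTime μ ℓ (k + 1 + ⌈δ * K⌉₊ : ℕ)).toReal := by gcongr
      _ ≤ (k + 1 + ⌈δ * K⌉₊ : ℕ) + c := hexit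
      _ ≤ δ * K + k + 2 + c := by
        push_cast
        linarith [Nat.ceil_lt_add_one (by positivity : 0 ≤ δ * K)]
  obtain ⟨K, hK⟩ := exists_nat_gt ((k + 2 + c) / δ)
  rw [div_lt_iff₀ hδ] at hK
  linarith [hbound K]

/-- if the law of large numbers `X_n/n → v` holds `P_0`-a.s. and
Kalikow's condition holds in direction `ℓ` with constant `ε` (so that
`E_0(X_{T_{U_L}}·ℓ) ≥ ε E_0(T_{U_L})` for the slabs `U_L = {x·ℓ ≤ L}`), then
`v ≠ 0`; in fact `v·ℓ > 0`. -/
theorem velocity_nonzero {d M : ℕ} (ℓ : Fin d → ℝ) (ε : ℝ)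
    (IP : Measure (Env d)) [IsProbabilityMeasure IP]
    (P : Env d → Measure (Traj d)) (hP : ∀ᵐ ω ∂IP, IsWalk (P ω) ω 0)
    (hgood : ∀ᵐ ω ∂IP, GoodEnv M ω)
    (ann : Measure (Traj d))
    (hann : ∀ S : Set (Traj d), MeasurableSet S → ann S = ∫⁻ ω, P ω S ∂IP)
    (hkal : KalikowCond IP P M ℓ ε)
    (hball : ∀ L : ℕ, 1 ≤ L →
      (∑' n : ℕ, ann {w | ∀ m ≤ n, dotl (w m) ℓ ≤ L}) ≠ ⊤ ∧
      ε * (∑' n : ℕ, ann {w | ∀ m ≤ n, dotl (w m) ℓ ≤ L}).toReal ≤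
        ∫ w, dotl (w (exitSlab ℓ L w)) ℓ ∂ann)
    (v : Fin d → ℝ)
    (hlln : ann {w | ∀ i : Fin d,
      Tendsto (fun n : ℕ => (w n i : ℝ) / n) atTop (nhds (v i))} = 1) :
    v ≠ 0 ∧ 0 < ∑ i, v i * ℓ i := by
  have hmix : IsMixture ann IP P := hann
  have := hmix.isProbabilityMeasure (hP.mono fun ω hω => hω.1)
  have hpath : ∀ᵐ w ∂ann, w 0 = 0 ∧ ∀ n, w (n + 1) - w n ∈ box d M := by
    refine hmix.ae_of_ae (by measurability) ?_
    filter_upwards [hP, hgood] with ω hω hωM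
    exact hω.ae_start_s19.and (hω.ae_increment_mem hωM.2.2)
  have hpos : 0 < ∑ i, v i * ℓ i := by
    refine pos_of_expectedExitTime_le hkal.1 (fun L hL => ⟨(hball L hL).1,
      (hball L hL).2.trans (integral_dotl_exitSlab_le ℓ hpath L.cast_nonneg)⟩) ?_
    exact (hlln ▸ one_pos).trans_le (measure_mono fun w hw => tendsto_dotl_div hw ℓ)
  exact ⟨fun hv => by simp [hv] at hpos, hpos⟩
end
end
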